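/- If A is G-pseudo-injective and there exists a permutation π of {1,…,n} such that λ_i^{-1}(O) = μ_{π(i)}^{-1}(O) for every i ∈ {1,…,n} and every orbit O ∈ A/G, then f extends to a G-monomial map of A^n. -/

import Mathlib

variable {R A : Type*} [Ring R] [AddCommGroup A] [Module R A]

/-- The orbit of `a₀ ∈ A` under a subgroup `G ≤ Aut_R(A)`; the orbits in `A/G` are
exactly the sets `orbitG G a₀` for `a₀ : A`. -/
def orbitG (G : Subgroup (A ≃ₗ[R] A)) (a₀ : A) : Set A :=
  {b | ∃ g ∈ G, (g : A ≃ₗ[R] A) a₀ = b}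

/-- The symmetrized weight composition built on `G`: `swcG G a a₀` is the number of
coordinates of `a ∈ A^n` lying in the orbit of `a₀`. -/
noncomputable def swcG (G : Subgroup (A ≃ₗ[R] A)) {n : ℕ} (a : Fin n → A) (a₀ : A) : ℚ :=
  Nat.card {i : Fin n // a i ∈ orbitG G a₀}

/-- Membership in the closure `Ḡ` of `G`: `g` maps every `G`-orbit onto itself. -/
def inClosure (G : Subgroup (A ≃ₗ[R] A)) (g : A ≃ₗ[R] A) : Prop :=
  ∀ a₀ : A, (g : A ≃ₗ[R] A) '' orbitG G a₀ = orbitG G a₀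

/-- A map `h : A^n → A^n` is `G`-monomial if there are a permutation `π` and
automorphisms `g₁, …, g_n` in the closure `Ḡ` with `h(a)_i = g_i (a_{π i})`. -/
def IsGMonomial (G : Subgroup (A ≃ₗ[R] A)) {n : ℕ} (h : (Fin n → A) → (Fin n → A)) : Prop :=
  ∃ (π : Equiv.Perm (Fin n)) (g : Fin n → (A ≃ₗ[R] A)),
    (∀ i, inClosure G (g i)) ∧ ∀ (a : Fin n → A) (i : Fin n), h a i = (g i) (a (π i))

/-- `A` is `G`-pseudo-injective: every injective `R`-linear map `B → A` from a submodule
`B ⊆ A` satisfying `f(O ∩ B) ⊆ O` for every orbit `O ∈ A/G` extends to an element of `Ḡ`. -/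
def GPseudoInjective (R : Type*) (A : Type*) [Ring R] [AddCommGroup A] [Module R A]
    (G : Subgroup (A ≃ₗ[R] A)) : Prop :=
  ∀ (B : Submodule R A) (f : B →ₗ[R] A), Function.Injective f →
    (∀ (a₀ : A) (b : B), (b : A) ∈ orbitG G a₀ → f b ∈ orbitG G a₀) →
    ∃ g : A ≃ₗ[R] A, inClosure G g ∧ ∀ b : B, g (b : A) = f b

/-!
Coordinatewise, `λ_i` and `μ_{π(i)}` are linear maps `W → A` with the same fibres over every
orbit. The orbit of `0` is `{0}`, so they have the same kernel, and `μ_{π(i)}` factors through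
`λ_i` as an injective map `λ_i(W) → A` that preserves orbits. Pseudo-injectivity extends it to
some `g_i ∈ Ḡ` with `g_i ∘ λ_i = μ_{π(i)}`, and `a ↦ (g_{π⁻¹ j}(a_{π⁻¹ j}))_j` is the required
`G`-monomial extension of `f`.
-/

section

variable {W : Type*} [AddCommGroup W] [Module R W]

theorem orbitG_zero (G : Subgroup (A ≃ₗ[R] A)) : orbitG G (0 : A) = {0} := by
  ext b
  constructor
  · rintro ⟨g, -, rfl⟩
    simp
  · rintro rfl
    exact ⟨1, one_mem G, by simp⟩

theorem LinearMap.exists_injective_factorization_of_ker_eq (l m : W →ₗ[R] A)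
    (hker : LinearMap.ker l = LinearMap.ker m) :
    ∃ φ : LinearMap.range l →ₗ[R] A,
      Function.Injective φ ∧ ∀ w, φ ⟨l w, LinearMap.mem_range_self l w⟩ = m w := by
  refine ⟨(LinearMap.ker l).liftQ m hker.le ∘ₗ l.quotKerEquivRange.symm.toLinearMap, ?_, ?_⟩
  · have hinj : LinearMap.ker ((LinearMap.ker l).liftQ m hker.le) = ⊥ :=
      Submodule.ker_liftQ_eq_bot _ _ _ hker.ge
    exact (LinearMap.ker_eq_bot.mp hinj).comp l.quotKerEquivRange.symm.injective
  · intro w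
    simp

theorem GPseudoInjective.exists_inClosure_comp_eq {G : Subgroup (A ≃ₗ[R] A)}
    (hpi : GPseudoInjective R A G) (l m : W →ₗ[R] A)
    (hfib : ∀ a₀ : A, l ⁻¹' orbitG G a₀ = m ⁻¹' orbitG G a₀) :
    ∃ g : A ≃ₗ[R] A, inClosure G g ∧ ∀ w, g (l w) = m w := by
  have hker : LinearMap.ker l = LinearMap.ker m := by
    ext w
    simpa [orbitG_zero] using Set.ext_iff.mp (hfib 0) w
  obtain ⟨φ, hφinj, hφ⟩ := l.exists_injective_factorization_of_ker_eq m hker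
  have hφorb : ∀ (a₀ : A) (b : LinearMap.range l), (b : A) ∈ orbitG G a₀ → φ b ∈ orbitG G a₀ := by
    rintro a₀ ⟨-, w, rfl⟩ hb
    have hmw : m w ∈ orbitG G a₀ := by
      rw [← Set.mem_preimage, ← hfib a₀]
      exact hb
    rwa [← hφ w] at hmw
  obtain ⟨g, hg, hgφ⟩ := hpi _ φ hφinj hφorb
  exact ⟨g, hg, fun w => (hgφ ⟨l w, LinearMap.mem_range_self l w⟩).trans (hφ w)⟩

end

theorem extends_GMonomial_of_preimage_eq
    {W : Type*} [AddCommGroup W] [Module R W]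
    (G : Subgroup (A ≃ₗ[R] A)) {n : ℕ}
    (C : Submodule R (Fin n → A)) (lam : W →ₗ[R] (Fin n → A))
    (hmem : ∀ w : W, lam w ∈ C) (hsurj : ∀ c ∈ C, ∃ w : W, lam w = c)
    (f : C →ₗ[R] (Fin n → A))
    (hpi : GPseudoInjective R A G)
    (hperm : ∃ π : Equiv.Perm (Fin n), ∀ (i : Fin n) (a₀ : A),
      {w : W | lam w i ∈ orbitG G a₀} =
        {w : W | (f ⟨lam w, hmem w⟩ : Fin n → A) (π i) ∈ orbitG G a₀}) :
    ∃ h : (Fin n → A) → (Fin n → A),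
      IsGMonomial G h ∧ ∀ c : C, h (c : Fin n → A) = f c := by
  obtain ⟨π, hperm⟩ := hperm
  have hcoord : ∀ i, ∃ g : A ≃ₗ[R] A, inClosure G g ∧
      ∀ w, g (lam w i) = f ⟨lam w, hmem w⟩ (π i) := fun i =>
    hpi.exists_inClosure_comp_eq (LinearMap.proj i ∘ₗ lam)
      ((LinearMap.proj (π i) : (Fin n → A) →ₗ[R] A) ∘ₗ f ∘ₗ lam.codRestrict C hmem) (hperm i)
  choose g hg hgl using hcoord
  refine ⟨fun a j => g (π.symm j) (a (π.symm j)),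
    ⟨π.symm, fun j => g (π.symm j), fun j => hg _, fun _ _ => rfl⟩, ?_⟩
  rintro ⟨c, hc⟩
  obtain ⟨w, rfl⟩ := hsurj c hc
  funext j
  simpa using hgl (π.symm j) w
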